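/- arXiv:2105.11247 — 2 statements merged into one kernel-verified Lean document; each statement's English description precedes it below -/
import Mathlib

section
/- If G is a finite subgroup of PGL(2,F) that fixes a point of P^1(F), and the characteristic p of F divides |G|, then G has a normal elementary abelian p-subgroup whose quotient is cyclic of order coprime to p. -/
open Matrix Polynomial
open scoped LinearAlgebra.Projectivization MatrixGroups Pointwise

namespace PaperPGL

section Defs

variable (F : Type*) [Field F]

lemma glInj (g : GL (Fin 2) F) :
    Function.Injective ((g : Matrix (Fin 2) (Fin 2) F).mulVecLin) := by
  intro x y h
  have h2 := congrArg ((↑g⁻¹ : Matrix (Fin 2) (Fin 2) F).mulVecLin) h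
  simp only [Matrix.mulVecLin_apply, Matrix.mulVec_mulVec] at h2
  rw [← Matrix.GeneralLinearGroup.coe_mul, inv_mul_cancel] at h2
  simpa using h2

noncomputable instance : MulAction (GL (Fin 2) F) (ℙ F (Fin 2 → F)) where
  smul g x := Projectivization.map ((g : Matrix (Fin 2) (Fin 2) F).mulVecLin) (glInj F g) x
  one_smul x := by
    show Projectivization.map _ _ x = x
    have h1 : ((1 : GL (Fin 2) F) : Matrix (Fin 2) (Fin 2) F).mulVecLin
        = (LinearMap.id : (Fin 2 → F) →ₗ[F] (Fin 2 → F)) := by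
      rw [Matrix.GeneralLinearGroup.coe_one, Matrix.mulVecLin_one]
    simp only [h1]
    rw [Projectivization.map_id]
    rfl
  mul_smul g h x := by
    show Projectivization.map _ _ x = Projectivization.map _ _ (Projectivization.map _ _ x)
    have h1 : ((g * h : GL (Fin 2) F) : Matrix (Fin 2) (Fin 2) F).mulVecLin
        = ((g : Matrix (Fin 2) (Fin 2) F).mulVecLin).comp
          ((h : Matrix (Fin 2) (Fin 2) F).mulVecLin) := by
      rw [← Matrix.mulVecLin_mul, ← Matrix.GeneralLinearGroup.coe_mul]
    simp only [h1]
    rw [Projectivization.map_comp]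
    rfl

/-- The image of `GL(2,F)` in the permutations of the projective line: `PGL(2,F)`
acting faithfully on `ℙ¹(F)`. -/
noncomputable def toPGL : GL (Fin 2) F →* Equiv.Perm (ℙ F (Fin 2 → F)) :=
  MulAction.toPermHom _ _

/-- `PGL(2,F)` as a subgroup of the permutation group of the projective line `ℙ¹(F)`. -/
noncomputable def pgl : Subgroup (Equiv.Perm (ℙ F (Fin 2 → F))) :=
  (toPGL F).range

/-- Entrywise base change `GL(2,F) →* GL(2,K)` along a ring hom. -/
noncomputable def baseChange (F K : Type*) [Field F] [Field K] (phi : F →+* K) :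
    GL (Fin 2) F →* GL (Fin 2) K :=
  Units.map phi.mapMatrix.toMonoidHom

end Defs

end PaperPGL

/-!
Let `z` be the common fixed point and lift `G` to the stabilizer of the line `z` in `GL(2,F)`.
There `g ↦ a² / det g`, with `a` the eigenvalue of `g` on `z`, is a character that kills the
scalars, so it descends to `φ : G →* Fˣ`. The quotient `G ⧸ ker φ` embeds in `Fˣ`, hence is
cyclic, and it has no element of order `p` because `x ^ p = 1` forces `x = 1` in characteristic
`p`. An element of `ker φ` lifts to a matrix whose eigenvalues both equal `a`; fixing `z`, it is
`a • 1 + b • N` for one square-zero matrix `N` depending only on `z`. Such matrices commute, and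
their `p`-th powers are scalar.
-/

section TwoByTwo

variable {F : Type*} [Field F]

/-- The matrix of `x ↦ (v 0 * x 1 - v 1 * x 0) • v`, with kernel and image the line of `v`. -/
def nilpotentAlong (v : Fin 2 → F) : Matrix (Fin 2) (Fin 2) F :=
  Matrix.vecMulVec v ![-v 1, v 0]

lemma nilpotentAlong_mul_self (v : Fin 2 → F) : nilpotentAlong v * nilpotentAlong v = 0 := by
  rw [nilpotentAlong, Matrix.vecMulVec_mul_vecMulVec]
  simp [dotProduct, Fin.sum_univ_two, mul_comm]

/-- The eigenvalues of `M` are `c` and `det M / c = c`. -/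
lemma trace_eq_two_mul_of_mulVec_eq_smul {M : Matrix (Fin 2) (Fin 2) F} {v : Fin 2 → F}
    (hv : v ≠ 0) {c : F} (hc : c ≠ 0) (hMv : M *ᵥ v = c • v) (hdet : M.det = c ^ 2) :
    M.trace = 2 * c := by
  have e0 := congrFun hMv 0
  have e1 := congrFun hMv 1
  simp only [mulVec, dotProduct, Fin.isValue, Fin.sum_univ_two, Pi.smul_apply, smul_eq_mul] at e0 e1
  rw [Matrix.det_fin_two] at hdet
  rw [Matrix.trace_fin_two]
  have h0 : c * (M 0 0 + M 1 1 - 2 * c) * v 0 = 0 := by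
    linear_combination v 0 * hdet + (c - M 1 1) * e0 + M 0 1 * e1
  have h1 : c * (M 0 0 + M 1 1 - 2 * c) * v 1 = 0 := by
    linear_combination v 1 * hdet + (c - M 0 0) * e1 + M 1 0 * e0
  by_contra h
  have h' : c * (M 0 0 + M 1 1 - 2 * c) ≠ 0 := mul_ne_zero hc (sub_ne_zero.mpr h)
  exact hv (funext (Fin.forall_fin_two.mpr
    ⟨(mul_eq_zero.mp h0).resolve_left h', (mul_eq_zero.mp h1).resolve_left h'⟩))

lemma exists_eq_smul_one_add_smul_nilpotentAlong {M : Matrix (Fin 2) (Fin 2) F} {v : Fin 2 → F}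
    (hv : v ≠ 0) {c : F} (hc : c ≠ 0) (hMv : M *ᵥ v = c • v) (hdet : M.det = c ^ 2) :
    ∃ b : F, M = c • 1 + b • nilpotentAlong v := by
  have htr := trace_eq_two_mul_of_mulVec_eq_smul hv hc hMv hdet
  rw [Matrix.trace_fin_two] at htr
  have e0 := congrFun hMv 0
  have e1 := congrFun hMv 1
  simp only [mulVec, dotProduct, Fin.isValue, Fin.sum_univ_two, Pi.smul_apply, smul_eq_mul] at e0 e1
  have hoff : M 0 1 * v 1 ^ 2 + M 1 0 * v 0 ^ 2 = 0 := by
    linear_combination v 1 * e0 + v 0 * e1 - v 0 * v 1 * htr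
  obtain ⟨b, h00, h01, h10, h11⟩ : ∃ b : F, M 0 0 = c + b * (v 0 * -v 1) ∧
      M 0 1 = b * (v 0 * v 0) ∧ M 1 0 = b * (v 1 * -v 1) ∧ M 1 1 = c + b * (v 1 * v 0) := by
    by_cases h0 : v 0 = 0
    · have h1 : v 1 ≠ 0 := fun h1 => hv (funext (Fin.forall_fin_two.mpr ⟨h0, h1⟩))
      refine ⟨-M 1 0 / v 1 ^ 2, ?_, ?_, ?_, ?_⟩ <;> field_simp
      · linear_combination v 1 * htr - e1
      · linear_combination hoff
      · linear_combination e1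
    · refine ⟨M 0 1 / v 0 ^ 2, ?_, ?_, ?_, ?_⟩ <;> field_simp
      · linear_combination e0
      · linear_combination hoff
      · linear_combination v 0 * htr - e0
  refine ⟨b, Matrix.ext fun i j => ?_⟩
  fin_cases i <;> fin_cases j <;> simp [nilpotentAlong, h00, h01, h10, h11]

end TwoByTwo

section Algebra

variable {F A : Type*} [Field F] [Ring A] [Algebra F A]

lemma commute_smul_one_add_smul (x : A) (c b c' b' : F) :
    Commute (c • 1 + b • x) (c' • 1 + b' • x) :=
  ((Commute.one_left _).smul_left c).add_left
    ((((Commute.one_right x).smul_right c').add_right ((Commute.refl x).smul_right b')).smul_left b)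

lemma smul_one_add_smul_pow_char {p : ℕ} [Fact p.Prime] [CharP A p] {x : A} (hx : x * x = 0)
    (c b : F) : (c • 1 + b • x) ^ p = c ^ p • 1 := by
  have hbx : (b • x) ^ 2 = 0 := by rw [sq, smul_mul_smul_comm, hx, smul_zero]
  rw [add_pow_char_of_commute (p := p) (h := (Commute.one_left _).smul_left c), _root_.smul_pow,
    one_pow, pow_eq_zero_of_le (Fact.out : p.Prime).two_le hbx, add_zero]

end Algebra

lemma coprime_card_of_injective_units {F K : Type*} [Field F] [Group K] [Finite K] {p : ℕ}
    (hp : p.Prime) [CharP F p] (f : K →* Fˣ) (hf : Function.Injective f) :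
    (Nat.card K).Coprime p := by
  have := Fact.mk hp
  refine (Nat.coprime_comm.mp ((Nat.Prime.coprime_iff_not_dvd hp).mpr fun hdvd => ?_))
  obtain ⟨x, hx⟩ := exists_prime_orderOf_dvd_card' p hdvd
  have hfx : ((f x : Fˣ) : F) = 1 := frobenius_inj F p <| by
    rw [frobenius_def, frobenius_def, one_pow, ← Units.val_pow_eq_pow_val, ← map_pow, ← hx,
      pow_orderOf_eq_one, map_one, Units.val_one]
  have : x = 1 := hf (by rw [map_one]; exact Units.ext hfx)
  exact hp.one_lt.ne' (by rw [← hx, this, orderOf_one])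

lemma MonoidHom.exists_lift_of_ker_le {S K A : Type*} [Group S] [Group K] [Group A] (π : S →* K)
    {χ : S →* A} (hχ : π.ker ≤ χ.ker) {G : Subgroup K} (hG : G ≤ π.range) :
    ∃ φ : G →* A, ∀ (s : S) (σ : G), π s = σ → φ σ = χ s := by
  have hsurj : Function.Surjective (π.subgroupComap G) := by
    rintro ⟨σ, hσ⟩
    obtain ⟨s, rfl⟩ := hG hσ
    exact ⟨⟨s, hσ⟩, rfl⟩
  refine ⟨(π.subgroupComap G).liftOfRightInverse _ (Function.rightInverse_surjInv hsurj)
      ⟨χ.comp (G.comap π).subtype, fun s hs => hχ (congrArg Subtype.val hs)⟩,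
    fun s ⟨_, hσ⟩ hsσ => ?_⟩
  subst hsσ
  exact MonoidHom.liftOfRightInverse_comp_apply _ _ _ _ (⟨s, hσ⟩ : G.comap π)

namespace PaperPGL

section ProjectiveLine

variable {F : Type*} [Field F]

lemma mulVec_ne_zero (g : GL (Fin 2) F) {w : Fin 2 → F} (hw : w ≠ 0) :
    (g : Matrix (Fin 2) (Fin 2) F) *ᵥ w ≠ 0 :=
  ((Matrix.mulVec_injective_of_isUnit g.isUnit).ne_iff' (Matrix.mulVec_zero _)).mpr hw

lemma smul_mk (g : GL (Fin 2) F) (w : Fin 2 → F) (hw : w ≠ 0) :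
    g • Projectivization.mk F w hw =
      Projectivization.mk F ((g : Matrix (Fin 2) (Fin 2) F) *ᵥ w) (mulVec_ne_zero g hw) :=
  Projectivization.map_mk _ _ _ _

lemma toPGL_apply (g : GL (Fin 2) F) (x : ℙ F (Fin 2 → F)) : toPGL F g x = g • x := rfl

lemma exists_eq_smul_one_of_toPGL_eq_one (g : GL (Fin 2) F) (h : toPGL F g = 1) :
    ∃ a : F, (g : Matrix (Fin 2) (Fin 2) F) = a • 1 := by
  have eigen (w : Fin 2 → F) (hw : w ≠ 0) :
      ∃ a : F, a • w = (g : Matrix (Fin 2) (Fin 2) F) *ᵥ w :=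
    (Projectivization.mk_eq_mk_iff' F _ _ _ hw).mp (by rw [← smul_mk, ← toPGL_apply, h]; rfl)
  obtain ⟨a, ha⟩ := eigen ![1, 0] (by simp)
  obtain ⟨b, hb⟩ := eigen ![0, 1] (by simp)
  obtain ⟨c, hc⟩ := eigen ![1, 1] (by simp)
  simp only [smul_cons, smul_eq_mul, mul_one, mul_zero, smul_empty, mulVec_fin_two, Fin.isValue,
    cons_val_zero, cons_val_one, cons_val_fin_one, add_zero, zero_add, funext_iff,
    Fin.forall_fin_two] at ha hb hc
  have h11 : (g : Matrix (Fin 2) (Fin 2) F) 1 1 = a := by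
    linear_combination hc.1 - hc.2 - ha.1 - hb.1 + ha.2
  refine ⟨a, Matrix.ext fun i j => ?_⟩
  fin_cases i <;> fin_cases j <;> simp [← ha.1, ← ha.2, ← hb.1, h11]

lemma toPGL_eq_one_of_eq_smul_one (g : GL (Fin 2) F) (a : F)
    (h : (g : Matrix (Fin 2) (Fin 2) F) = a • 1) : toPGL F g = 1 := by
  ext x
  induction x using Projectivization.ind with
  | h w hw =>
    rw [Equiv.Perm.one_apply, toPGL_apply, smul_mk, Projectivization.mk_eq_mk_iff']
    exact ⟨a, by rw [h, Matrix.smul_mulVec, Matrix.one_mulVec]⟩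

lemma exists_mulVec_rep_eq_smul {g : GL (Fin 2) F} {z : ℙ F (Fin 2 → F)}
    (h : g ∈ MulAction.stabilizer (GL (Fin 2) F) z) :
    ∃ c : Fˣ, (g : Matrix (Fin 2) (Fin 2) F) *ᵥ z.rep = (c : F) • z.rep := by
  rw [MulAction.mem_stabilizer_iff, ← z.mk_rep, smul_mk, Projectivization.mk_eq_mk_iff] at h
  obtain ⟨c, hc⟩ := h
  exact ⟨c, hc.symm⟩

lemma toPGL_commute {g g' : GL (Fin 2) F} {v : Fin 2 → F} {c b c' b' : F}
    (hg : (g : Matrix (Fin 2) (Fin 2) F) = c • 1 + b • nilpotentAlong v)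
    (hg' : (g' : Matrix (Fin 2) (Fin 2) F) = c' • 1 + b' • nilpotentAlong v) :
    Commute (toPGL F g) (toPGL F g') := by
  have : g * g' = g' * g := Units.ext <| by
    rw [Matrix.GeneralLinearGroup.coe_mul, Matrix.GeneralLinearGroup.coe_mul, hg, hg']
    exact commute_smul_one_add_smul _ _ _ _ _
  rw [Commute, SemiconjBy, ← map_mul, this, map_mul]

lemma toPGL_pow_char_eq_one {p : ℕ} [Fact p.Prime] [CharP F p] {g : GL (Fin 2) F}
    {v : Fin 2 → F} {c b : F}
    (hg : (g : Matrix (Fin 2) (Fin 2) F) = c • 1 + b • nilpotentAlong v) :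
    toPGL F g ^ p = 1 := by
  rw [← map_pow]
  refine toPGL_eq_one_of_eq_smul_one _ (c ^ p) ?_
  rw [Units.val_pow_eq_pow_val, hg, smul_one_add_smul_pow_char (nilpotentAlong_mul_self v)]

lemma le_range_toPGL_comp_subtype {G : Subgroup (Equiv.Perm (ℙ F (Fin 2 → F)))}
    (hG : G ≤ pgl F) {z : ℙ F (Fin 2 → F)} (hz : ∀ σ ∈ G, σ z = z) :
    G ≤ ((toPGL F).comp (MulAction.stabilizer (GL (Fin 2) F) z).subtype).range := by
  intro σ hσ
  obtain ⟨g, rfl⟩ := hG hσ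
  exact ⟨⟨g, hz _ hσ⟩, rfl⟩

end ProjectiveLine

section Stabilizer

variable {F : Type*} [Field F] (z : ℙ F (Fin 2 → F))

noncomputable def eigenvalue : MulAction.stabilizer (GL (Fin 2) F) z →* Fˣ :=
  MonoidHom.mk' (fun g => (exists_mulVec_rep_eq_smul g.2).choose) fun g h => by
    have spec (g : MulAction.stabilizer (GL (Fin 2) F) z) :=
      (exists_mulVec_rep_eq_smul g.2).choose_spec
    refine Units.ext (smul_left_injective F z.rep_nonzero ((spec (g * h)).symm.trans ?_))
    -- a `calc`, since `rw [spec h]` would also hit the type of the chosen eigenvalue of `h`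
    calc (((g * h : MulAction.stabilizer (GL (Fin 2) F) z) : GL (Fin 2) F) :
          Matrix (Fin 2) (Fin 2) F) *ᵥ z.rep
        = ((g : GL (Fin 2) F) : Matrix (Fin 2) (Fin 2) F) *ᵥ
            (((h : GL (Fin 2) F) : Matrix (Fin 2) (Fin 2) F) *ᵥ z.rep) := by
          rw [Subgroup.coe_mul, Matrix.GeneralLinearGroup.coe_mul, Matrix.mulVec_mulVec]
      _ = _ := congrArg _ (spec h)
      _ = _ := Matrix.mulVec_smul _ _ _
      _ = _ := congrArg _ (spec g)
      _ = _ := by rw [smul_smul, mul_comm]; rfl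

lemma mulVec_rep_eq_eigenvalue_smul (g : MulAction.stabilizer (GL (Fin 2) F) z) :
    ((g : GL (Fin 2) F) : Matrix (Fin 2) (Fin 2) F) *ᵥ z.rep = (eigenvalue z g : F) • z.rep :=
  (exists_mulVec_rep_eq_smul g.2).choose_spec

/-- On the Borel subgroup `!![a, b; 0, d]` fixing the line of the first basis vector, this is the
character `a / d`. -/
noncomputable def eigenvalueRatio : MulAction.stabilizer (GL (Fin 2) F) z →* Fˣ :=
  eigenvalue z ^ 2 /
    Matrix.GeneralLinearGroup.det.comp (MulAction.stabilizer (GL (Fin 2) F) z).subtype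

lemma ker_toPGL_comp_subtype_le_ker_eigenvalueRatio :
    ((toPGL F).comp (MulAction.stabilizer (GL (Fin 2) F) z).subtype).ker ≤
      (eigenvalueRatio z).ker := by
  intro g hg
  obtain ⟨a, ha⟩ := exists_eq_smul_one_of_toPGL_eq_one (g : GL (Fin 2) F) hg
  have hc : (eigenvalue z g : F) = a := smul_left_injective F z.rep_nonzero <|
    (mulVec_rep_eq_eigenvalue_smul z g).symm.trans <| by
      rw [ha, Matrix.smul_mulVec, Matrix.one_mulVec]
  have hdet : ((g : GL (Fin 2) F) : Matrix (Fin 2) (Fin 2) F).det = a ^ 2 := by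
    rw [ha, Matrix.det_smul, Matrix.det_one, Fintype.card_fin, mul_one]
  have ha0 : a ≠ 0 := hc ▸ Units.ne_zero _
  rw [MonoidHom.mem_ker]
  ext
  simp [eigenvalueRatio, hc, hdet, ha0]

lemma exists_eq_smul_one_add_smul_of_eigenvalueRatio_eq_one
    (g : MulAction.stabilizer (GL (Fin 2) F) z) (hg : eigenvalueRatio z g = 1) :
    ∃ b : F, ((g : GL (Fin 2) F) : Matrix (Fin 2) (Fin 2) F) =
      (eigenvalue z g : F) • 1 + b • nilpotentAlong z.rep := by
  refine exists_eq_smul_one_add_smul_nilpotentAlong z.rep_nonzero (Units.ne_zero _)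
    (mulVec_rep_eq_eigenvalue_smul z g) ?_
  simpa using congrArg Units.val (div_eq_one.mp hg).symm

end Stabilizer

theorem stmt2_general (F : Type*) [Field F] (p : ℕ) (hp : p.Prime) [CharP F p]
    (G : Subgroup (Equiv.Perm (ℙ F (Fin 2 → F)))) (hG : G ≤ pgl F) (hfin : Finite G)
    (hfix : ∃ z : ℙ F (Fin 2 → F), ∀ σ ∈ G, σ z = z) :
    ∃ N : Subgroup G, ∃ hN : N.Normal, (∀ a ∈ N, ∀ b ∈ N, a * b = b * a) ∧
      (∀ a ∈ N, a ^ p = 1) ∧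
      (letI : N.Normal := hN
       IsCyclic (G ⧸ N) ∧ Nat.Coprime (Nat.card (G ⧸ N)) p) := by
  have := Fact.mk hp
  obtain ⟨z, hz⟩ := hfix
  have hrange := le_range_toPGL_comp_subtype hG hz
  obtain ⟨φ, hφ⟩ :=
    MonoidHom.exists_lift_of_ker_le _ (ker_toPGL_comp_subtype_le_ker_eigenvalueRatio z) hrange
  have lift (σ : G) (hσ : σ ∈ φ.ker) : ∃ (g : GL (Fin 2) F) (c b : F), toPGL F g = σ ∧
      (g : Matrix (Fin 2) (Fin 2) F) = c • 1 + b • nilpotentAlong z.rep := by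
    obtain ⟨s, hs⟩ := hrange σ.2
    obtain ⟨b, hb⟩ :=
      exists_eq_smul_one_add_smul_of_eigenvalueRatio_eq_one z s ((hφ s σ hs).symm.trans hσ)
    exact ⟨s, _, b, hs, hb⟩
  have hinj := QuotientGroup.kerLift_injective φ
  refine ⟨φ.ker, φ.normal_ker, fun a ha b hb => ?_, fun a ha => ?_,
    isCyclic_of_injective_ringHom ((Units.coeHom F).comp (QuotientGroup.kerLift φ))
      (Units.val_injective.comp hinj),
    coprime_card_of_injective_units hp _ hinj⟩
  · obtain ⟨g, _, _, hga, hg⟩ := lift a ha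
    obtain ⟨g', _, _, hgb, hg'⟩ := lift b hb
    exact Subtype.ext <| by
      rw [Subgroup.coe_mul, Subgroup.coe_mul, ← hga, ← hgb]
      exact (toPGL_commute hg hg').eq
  · obtain ⟨g, _, _, hga, hg⟩ := lift a ha
    exact Subtype.ext <| by
      rw [Subgroup.coe_pow, ← hga, toPGL_pow_char_eq_one hg, Subgroup.coe_one]

/-- A finite subgroup of `PGL(2,F)` fixing a point of `ℙ¹(F)`, with `p = char F` dividing its
order, has a normal elementary abelian `p`-subgroup with cyclic quotient of order coprime
to `p`. -/
theorem stmt2 (F : Type*) [Field F] (p : ℕ) (hp : p.Prime) [CharP F p]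
    (G : Subgroup (Equiv.Perm (ℙ F (Fin 2 → F)))) (hG : G ≤ pgl F) (hfin : Finite G)
    (hfix : ∃ z : ℙ F (Fin 2 → F), ∀ σ ∈ G, σ z = z)
    (hdvd : p ∣ Nat.card G) :
    ∃ N : Subgroup G, ∃ hN : N.Normal, (∀ a ∈ N, ∀ b ∈ N, a * b = b * a) ∧
      (∀ a ∈ N, a ^ p = 1) ∧
      (letI : N.Normal := hN
       IsCyclic (G ⧸ N) ∧ Nat.Coprime (Nat.card (G ⧸ N)) p) :=
  stmt2_general F p hp G hG hfin hfix

end PaperPGL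
end

section
/- Every element of PGL(2,F), F of characteristic p > 0, whose order is divisible by p has order exactly p. -/
/-!
Write `σ = [g]` with `orderOf σ = p * m`. Scalars are exactly the matrices acting trivially on
`ℙ¹(F)`, so `C = g ^ m` is not scalar while `C ^ p` is. A non-scalar `2 × 2` matrix has
commutant `F[C]`, hence `g = a + b C`, and in characteristic `p` this gives
`g ^ p = a ^ p + b ^ p C ^ p`, a scalar. Thus `σ ^ p = 1` and `orderOf σ = p`.
-/

open Matrix Polynomial
open scoped LinearAlgebra.Projectivization MatrixGroups Pointwise

section Centralizer

variable {K : Type*} [Field K]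

theorem Matrix.exists_eq_smul_one_add_smul_of_commute {B C : Matrix (Fin 2) (Fin 2) K}
    (hC : ∀ c : K, C ≠ c • 1) (hBC : Commute B C) : ∃ a b : K, B = a • 1 + b • C := by
  have hBC' := fun i j ↦ congrFun (congrFun hBC.eq i) j
  simp only [Matrix.mul_apply, Fin.sum_univ_two] at hBC'
  have e00 := hBC' 0 0
  have e01 := hBC' 0 1
  have e10 := hBC' 1 0
  -- These say that `(B₀₀ - B₁₁, B₀₁, B₁₀)` and `(C₀₀ - C₁₁, C₀₁, C₁₀)` are parallel; the latter
  -- is nonzero because `C` is not scalar.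
  have hne : C 0 0 - C 1 1 ≠ 0 ∨ C 0 1 ≠ 0 ∨ C 1 0 ≠ 0 := by
    by_contra! ⟨h1, h2, h3⟩
    exact hC (C 1 1) (by ext i j; fin_cases i <;> fin_cases j <;> simp [h2, h3, sub_eq_zero.mp h1])
  obtain ⟨b, hb0, hb1, hb2⟩ : ∃ b : K, B 0 0 - B 1 1 = b * (C 0 0 - C 1 1) ∧
      B 0 1 = b * C 0 1 ∧ B 1 0 = b * C 1 0 := by
    rcases hne with h | h | h
    · refine ⟨(B 0 0 - B 1 1) / (C 0 0 - C 1 1), ?_, ?_, ?_⟩ <;> field_simp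
      · linear_combination -e01
      · linear_combination e10
    · refine ⟨B 0 1 / C 0 1, ?_, ?_, ?_⟩ <;> field_simp
      · linear_combination e01
      · linear_combination -e00
    · refine ⟨B 1 0 / C 1 0, ?_, ?_, ?_⟩ <;> field_simp
      · linear_combination -e10
      · linear_combination e00
  refine ⟨B 1 1 - b * C 1 1, b, ?_⟩
  ext i j
  fin_cases i <;> fin_cases j <;> simp [hb1, hb2]
  linear_combination hb0

theorem Matrix.exists_pow_char_eq_smul_one_of_commute (p : ℕ) [Fact p.Prime] [CharP K p]
    {B C : Matrix (Fin 2) (Fin 2) K} (hC : ∀ c : K, C ≠ c • 1) (hBC : Commute B C)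
    (hCp : ∃ c : K, C ^ p = c • 1) : ∃ c : K, B ^ p = c • 1 := by
  obtain ⟨a, b, rfl⟩ := Matrix.exists_eq_smul_one_add_smul_of_commute hC hBC
  obtain ⟨c, hc⟩ := hCp
  refine ⟨a ^ p + b ^ p * c, ?_⟩
  rw [add_pow_char_of_commute _ (((Commute.one_left C).smul_left a).smul_right b),
    _root_.smul_pow, _root_.smul_pow, hc, one_pow, smul_smul, add_smul]

end Centralizer

namespace PaperPGL

section Kernel

variable {F : Type*} [Field F]

theorem toPGL_mk (g : GL (Fin 2) F) {v : Fin 2 → F} (hv : v ≠ 0) :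
    toPGL F g (Projectivization.mk F v hv) =
      Projectivization.mk F ((g : Matrix (Fin 2) (Fin 2) F).mulVecLin v)
        ((map_ne_zero_iff _ (glInj F g)).mpr hv) :=
  Projectivization.map_mk _ (glInj F g) v hv

theorem toPGL_eq_one_iff (g : GL (Fin 2) F) :
    toPGL F g = 1 ↔ ∃ c : F, (g : Matrix (Fin 2) (Fin 2) F) = c • 1 := by
  constructor
  · intro hg
    have hline : ∀ v, ¬LinearIndependent F ![v, (g : Matrix (Fin 2) (Fin 2) F).mulVecLin v] := by
      intro v
      by_cases hv : v = 0
      · simp [hv, linearIndependent_fin2]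
      · simpa [toPGL_mk, LinearIndependent.pair_iff' hv, Projectivization.mk_eq_mk_iff'] using
          DFunLike.congr_fun hg (Projectivization.mk F v hv)
    obtain ⟨c, hc⟩ := LinearMap.exists_eq_smul_id_of_forall_notLinearIndependent hline
    refine ⟨c, ?_⟩
    calc (g : Matrix (Fin 2) (Fin 2) F)
        = LinearMap.toMatrix' (g : Matrix (Fin 2) (Fin 2) F).mulVecLin :=
          (LinearMap.toMatrix'_toLin' _).symm
      _ = c • 1 := by rw [hc, map_smul, LinearMap.toMatrix'_one]
  · rintro ⟨c, hc⟩
    ext x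
    induction x using Projectivization.ind with
    | h v hv =>
      rw [Equiv.Perm.coe_one, id_eq, toPGL_mk, Projectivization.mk_eq_mk_iff']
      exact ⟨c, by rw [Matrix.mulVecLin_apply, hc, smul_mulVec, one_mulVec]⟩

theorem toPGL_pow_eq_one_iff (g : GL (Fin 2) F) (k : ℕ) :
    toPGL F g ^ k = 1 ↔ ∃ c : F, (g : Matrix (Fin 2) (Fin 2) F) ^ k = c • 1 := by
  rw [← map_pow, toPGL_eq_one_iff, Units.val_pow_eq_pow_val]

end Kernel

/-- Every element of finite order of `PGL(2,F)`, `char F = p > 0`, whose order is divisible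
by `p` has order exactly `p`. -/
theorem stmt8 (F : Type*) [Field F] (p : ℕ) (hp : p.Prime) [CharP F p]
    (σ : Equiv.Perm (ℙ F (Fin 2 → F))) (hσ : σ ∈ pgl F)
    (hfin : IsOfFinOrder σ) (hdvd : p ∣ orderOf σ) :
    orderOf σ = p := by
  have : Fact p.Prime := ⟨hp⟩
  obtain ⟨g, rfl⟩ := hσ
  obtain ⟨m, hm⟩ := hdvd
  have hm0 : m ≠ 0 := by rintro rfl; exact hfin.orderOf_pos.ne' hm
  have hm_lt : m < orderOf (toPGL F g) := by
    rw [hm]; exact lt_mul_left (Nat.pos_of_ne_zero hm0) hp.one_lt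
  have hC : ∀ c : F, (g : Matrix (Fin 2) (Fin 2) F) ^ m ≠ c • 1 := fun c hc ↦
    pow_ne_one_of_lt_orderOf hm0 hm_lt ((toPGL_pow_eq_one_iff g m).mpr ⟨c, hc⟩)
  have hCp : ∃ c : F, ((g : Matrix (Fin 2) (Fin 2) F) ^ m) ^ p = c • 1 := by
    rw [← pow_mul, mul_comm, ← hm, ← toPGL_pow_eq_one_iff]
    exact pow_orderOf_eq_one _
  have hgp : toPGL F g ^ p = 1 := (toPGL_pow_eq_one_iff g p).mpr
    (Matrix.exists_pow_char_eq_smul_one_of_commute p hC (Commute.self_pow _ m) hCp)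
  exact Nat.dvd_antisymm (orderOf_dvd_of_pow_eq_one hgp) ⟨m, hm⟩

end PaperPGL
end
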